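/- arXiv:1901.04347 — 3 statements merged into one kernel-verified Lean document; each statement's English description precedes it below -/
import Mathlib

section
/- For every real number α, exp(α•B) · B · exp((π/2 − α)•B) = −Id, where Id is the 4×4 identity matrix; hence this product is a nonzero scalar multiple of the identity, giving a one-parameter family of decompositions of the canonical duality through the null-polarity B. -/
/-- The null-polarity matrix used in Cremona's method. -/
def Bmat : Matrix (Fin 4) (Fin 4) ℝ :=
  !![0, -1, 0, 0;
     1,  0, 0, 0;
     0,  0, 0, -1;
     0,  0, 1, 0]

/-! A square root `J` of `-1` in a real Banach algebra makes `ℂ` act through `z ↦ re z + im z • J`,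
so `exp (t • J)` is the image of `exp (t * I) = cos t + sin t * I`; in particular
`exp ((π / 2) • J) = J`. Since `exp (α • J)` commutes with `J`, the product
`exp (α • J) * J * exp ((π / 2 - α) • J)` collapses to `J * exp ((π / 2) • J) = J * J = -1`,
and the null-polarity `B` is such a `J`. -/

open NormedSpace Real

lemma Bmat_mul_self : Bmat * Bmat = -1 := by
  ext i j
  fin_cases i <;> fin_cases j <;>
    simp [Bmat, Matrix.mul_apply, Fin.sum_univ_four]

section SqrtNegOne

variable {A : Type*} [NormedRing A] [NormedAlgebra ℝ A] {J : A}

lemma exp_smul_eq_cos_smul_one_add_sin_smul (hJ : J * J = -1) (t : ℝ) :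
    exp (t • J) = cos t • (1 : A) + sin t • J := by
  let : NormedAlgebra ℚ A := NormedAlgebra.restrictScalars ℚ ℝ A
  set f : ℂ →ₐ[ℝ] A := Complex.liftAux J hJ with hf
  have hf_apply : (f : ℂ → A) = fun z => algebraMap ℝ A z.re + z.im • J := by
    funext z
    simp [hf]
  have hf_cont : Continuous f := by
    rw [hf_apply]
    fun_prop
  have hexp : exp ((t : ℂ) * Complex.I) = Complex.cos t + Complex.sin t * Complex.I := by
    rw [← Complex.exp_eq_exp_ℂ, Complex.exp_mul_I]
  calc exp (t • J) = exp (f (t * Complex.I)) := by simp [hf]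
    _ = f (exp ((t : ℂ) * Complex.I)) := (map_exp f hf_cont _).symm
    _ = cos t • (1 : A) + sin t • J := by
      rw [hexp, hf_apply]
      simp [← Complex.ofReal_cos, ← Complex.ofReal_sin, Algebra.algebraMap_eq_smul_one]

lemma exp_pi_div_two_smul (hJ : J * J = -1) : exp ((π / 2) • J) = J := by
  simp [exp_smul_eq_cos_smul_one_add_sin_smul hJ]

lemma exp_smul_mul_mul_exp_pi_div_two_sub_smul [CompleteSpace A] (hJ : J * J = -1) (α : ℝ) :
    exp (α • J) * J * exp ((π / 2 - α) • J) = -1 := by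
  let : NormedAlgebra ℚ A := NormedAlgebra.restrictScalars ℚ ℝ A
  have hcomm : Commute J (exp (α • J)) := ((Commute.refl J).smul_right α).exp_right
  calc exp (α • J) * J * exp ((π / 2 - α) • J)
      = J * (exp (α • J) * exp ((π / 2 - α) • J)) := by rw [← hcomm.eq, mul_assoc]
    _ = J * exp ((π / 2) • J) := by
      rw [← exp_add_of_commute (((Commute.refl J).smul_right _).smul_left _), ← add_smul,
        add_sub_cancel]
    _ = -1 := by rw [exp_pi_div_two_smul hJ, hJ]

end SqrtNegOne

attribute [local instance] Matrix.frobeniusNormedRing Matrix.frobeniusNormedAlgebra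

/-- For every real `α`, `exp (α • B) * B * exp ((π/2 - α) • B) = -Id`; hence this
product is a nonzero scalar multiple of the identity, giving a one-parameter
family of decompositions of the canonical duality through the null-polarity `B`. -/
theorem exp_decomposition_of_canonical_duality (α : ℝ) :
    NormedSpace.exp (α • Bmat) * Bmat * NormedSpace.exp ((Real.pi / 2 - α) • Bmat) =
        -(1 : Matrix (Fin 4) (Fin 4) ℝ) ∧
      ∃ c : ℝ, c ≠ 0 ∧
        NormedSpace.exp (α • Bmat) * Bmat * NormedSpace.exp ((Real.pi / 2 - α) • Bmat) =
          c • (1 : Matrix (Fin 4) (Fin 4) ℝ) := by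
  have key := exp_smul_mul_mul_exp_pi_div_two_sub_smul Bmat_mul_self α
  exact ⟨key, -1, by norm_num, key.trans (neg_one_smul ℝ _).symm⟩
end

section
/- Let M be an invertible 4×4 real matrix and let i ∈ ℝ⁴ be nonzero. Then the following are equivalent: (1) for every v ∈ ℝ⁴, the vector M·v lies in the linear span of {v, i} (i.e., the projective transformation represented by M maps every line of PG(3) through the point [i] to itself — the reciprocity condition for projection centre [i]); (2) there exist a nonzero real number c and a linear functional f : ℝ⁴ → ℝ such that M·v = c•v + f(v)•i for every v ∈ ℝ⁴ (i.e., M represents a central-axial collineation with centre [i], fixing pointwise the projective plane given by the kernel of f). -/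
/-!
If `T v ∈ span {v, i}` for all `v`, then `T` preserves the line `K ∙ i` and induces on the
quotient by it a map sending every vector to a multiple of itself, i.e. a homothety `c • id`.
Hence `T - c • id` takes values in `K ∙ i`, which is `v ↦ f v • i` for a linear functional `f`.
If `c = 0`, then `T` factors through `f`, which cannot be injective in dimension at least two.
-/

open Matrix

section

variable {K V : Type*} [Field K] [AddCommGroup V] [Module K V]

open Submodule in
theorem LinearMap.exists_sub_smul_mem_span_singleton_of_forall_mem_span_pair
    (T : V →ₗ[K] V) (i : V) (h : ∀ v, T v ∈ span K {v, i}) :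
    ∃ c : K, ∀ v, T v - c • v ∈ K ∙ i := by
  set W := K ∙ i
  have hTW : W ≤ W.comap T := by simpa [W, span_le] using h i
  have hquot : ∀ v, ∃ a : K, W.mkQ (T v) = a • W.mkQ v := fun v => by
    obtain ⟨a, b, hab⟩ := mem_span_pair.mp (h v)
    have hi : W.mkQ i = 0 := (Quotient.mk_eq_zero W).mpr (mem_span_singleton_self i)
    exact ⟨a, by rw [← hab, map_add, map_smul, map_smul, hi, smul_zero, add_zero]⟩
  obtain ⟨c, hc⟩ := (W.mapQ W T hTW).exists_eq_smul_id_of_forall_notLinearIndependent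
    fun w => by
      obtain ⟨v, rfl⟩ := W.mkQ_surjective w
      obtain ⟨a, ha⟩ := hquot v
      rw [LinearIndependent.pair_iff]
      push Not
      refine ⟨a, -1, ?_, by simp⟩
      rw [neg_one_smul, ← sub_eq_add_neg, sub_eq_zero]
      exact ha.symm
  refine ⟨c, fun v => (Quotient.mk_eq_zero W).mp ?_⟩
  have := LinearMap.congr_fun hc (W.mkQ v)
  simp only [mapQ_apply, mkQ_apply, LinearMap.smul_apply, Module.End.one_apply] at this
  rw [Quotient.mk_sub, this, Quotient.mk_smul, sub_self]

theorem LinearMap.exists_eq_smul_of_forall_mem_span_singleton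
    (g : V →ₗ[K] V) (i : V) (h : ∀ v, g v ∈ K ∙ i) :
    ∃ f : V →ₗ[K] K, ∀ v, g v = f v • i := by
  by_cases hi : i = 0
  · subst hi
    exact ⟨0, fun v => by simpa using h v⟩
  · refine ⟨LinearEquiv.coord K V i hi ∘ₗ g.codRestrict (K ∙ i) h, fun v => ?_⟩
    exact (LinearEquiv.coord_apply_smul K V i hi ⟨g v, h v⟩).symm

theorem LinearMap.exists_eq_smul_add_smul_of_forall_mem_span_pair
    (T : V →ₗ[K] V) (i : V) (h : ∀ v, T v ∈ Submodule.span K {v, i}) :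
    ∃ c : K, ∃ f : V →ₗ[K] K, ∀ v, T v = c • v + f v • i := by
  obtain ⟨c, hc⟩ := T.exists_sub_smul_mem_span_singleton_of_forall_mem_span_pair i h
  obtain ⟨f, hf⟩ := (T - c • LinearMap.id).exists_eq_smul_of_forall_mem_span_singleton i hc
  exact ⟨c, f, fun v => by rw [← hf]; simp⟩

theorem LinearMap.ne_zero_of_injective_of_eq_smul_add_smul (hV : 1 < Module.finrank K V)
    {T : V →ₗ[K] V} (hT : Function.Injective T) {c : K} {f : V →ₗ[K] K} {i : V}
    (h : ∀ v, T v = c • v + f v • i) : c ≠ 0 := by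
  rintro rfl
  have hf : Function.Injective f := fun v w hvw => hT <| by simp [h, hvw]
  have := LinearMap.finrank_le_finrank_of_injective hf
  rw [Module.finrank_self] at this
  omega

end

theorem reciprocity_iff_central_axial_collineation_general
    (M : Matrix (Fin 4) (Fin 4) ℝ) (hM : IsUnit M)
    (i : Fin 4 → ℝ) :
    (∀ v : Fin 4 → ℝ, M *ᵥ v ∈ Submodule.span ℝ ({v, i} : Set (Fin 4 → ℝ))) ↔
      (∃ c : ℝ, c ≠ 0 ∧ ∃ f : (Fin 4 → ℝ) →ₗ[ℝ] ℝ,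
        ∀ v : Fin 4 → ℝ, M *ᵥ v = c • v + f v • i) := by
  constructor
  · intro h
    obtain ⟨c, f, hcf⟩ := M.mulVecLin.exists_eq_smul_add_smul_of_forall_mem_span_pair i h
    have hc : c ≠ 0 := LinearMap.ne_zero_of_injective_of_eq_smul_add_smul (by simp)
      (mulVec_injective_of_isUnit hM) hcf
    exact ⟨c, hc, f, hcf⟩
  · rintro ⟨c, -, f, hf⟩ v
    exact Submodule.mem_span_pair.mpr ⟨c, f v, (hf v).symm⟩

/-- For an invertible `M` and nonzero `i`, the reciprocity condition (every line
through the projective point `[i]` is mapped to itself by `M`) is equivalent to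
`M` being a central-axial collineation with centre `[i]`: `M v = c • v + f v • i`
for a nonzero scalar `c` and a linear functional `f`. -/
theorem reciprocity_iff_central_axial_collineation
    (M : Matrix (Fin 4) (Fin 4) ℝ) (hM : IsUnit M)
    (i : Fin 4 → ℝ) (hi : i ≠ 0) :
    (∀ v : Fin 4 → ℝ, M *ᵥ v ∈ Submodule.span ℝ ({v, i} : Set (Fin 4 → ℝ))) ↔
      (∃ c : ℝ, c ≠ 0 ∧ ∃ f : (Fin 4 → ℝ) →ₗ[ℝ] ℝ,
        ∀ v : Fin 4 → ℝ, M *ᵥ v = c • v + f v • i) :=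
  reciprocity_iff_central_axial_collineation_general M hM i
end

section
/- Let D be the 4×4 real matrix with rows (0,−1,0,0), (1,0,0,0), (0,0,−3/4,−7/4), (0,0,1/4,−3/4), and let M = D^{−T}·D (where D^{−T} is the inverse transpose). Then M equals the matrix with rows (−1,0,0,0), (0,−1,0,0), (0,0,1/2,3/2), (0,0,−3/2,−5/2), and there exists a linear functional f : ℝ⁴ → ℝ such that M·v = −v + f(v)•i for all v ∈ ℝ⁴, where i = (0,0,−1,1); moreover f(i) = 0. Hence M is a central-axial collineation with centre [i] lying on its fixed plane (an elation), and D satisfies the reciprocity condition for projections with centre [i]. -/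
/-!
`M + 1` is the rank-one matrix `i wᵀ` with `w = (0, 0, -3/2, -3/2)`, so `M v = -v + (w ⬝ᵥ v) i`;
the centre lies on the axis because `w ⬝ᵥ i = 0`.
-/

open Matrix

noncomputable def Dmat : Matrix (Fin 4) (Fin 4) ℝ :=
  !![0, -1, 0, 0;
     1, 0, 0, 0;
     0, 0, -3/4, -7/4;
     0, 0, 1/4, -3/4]

theorem mulVec_smul_one_add_vecMulVec {R n : Type*} [CommSemiring R] [Fintype n] [DecidableEq n]
    (c : R) (i w v : n → R) : (c • 1 + vecMulVec i w) *ᵥ v = c • v + (w ⬝ᵥ v) • i := by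
  rw [add_mulVec, smul_mulVec, one_mulVec, vecMulVec_mulVec, op_smul_eq_smul]

theorem Dmat_inv : Dmat⁻¹ =
    !![0, 1, 0, 0;
       -1, 0, 0, 0;
       0, 0, -3/4, 7/4;
       0, 0, -1/4, -3/4] := by
  refine inv_eq_left_inv ?_
  ext i j
  fin_cases i <;> fin_cases j <;> norm_num [Dmat, mul_apply, Fin.sum_univ_succ]

theorem Dmat_inv_transpose_mul : (Dmat⁻¹)ᵀ * Dmat =
    !![-1, 0, 0, 0;
       0, -1, 0, 0;
       0, 0, 1/2, 3/2;
       0, 0, -3/2, -5/2] := by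
  rw [Dmat_inv]
  ext i j
  fin_cases i <;> fin_cases j <;> norm_num [Dmat, mul_apply, Fin.sum_univ_succ]

theorem Dmat_inv_transpose_mul_eq_neg_one_add_vecMulVec :
    (Dmat⁻¹)ᵀ * Dmat = (-1 : ℝ) • 1 + vecMulVec ![0, 0, -1, 1] ![0, 0, -3/2, -3/2] := by
  rw [Dmat_inv_transpose_mul]
  ext i j
  fin_cases i <;> fin_cases j <;> norm_num [vecMulVec_apply, one_apply]

/-- The twice-iterated duality `M = D⁻ᵀ * D` of the reciprocal example equals the
explicit matrix below, and `M v = -v + f v • i` for a linear functional `f` with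
`f i = 0`, where `i = (0, 0, -1, 1)`: `M` is an elation with centre `[i]` on its
fixed plane, so `D` satisfies the reciprocity condition for projections with
centre `[i]`. -/
theorem reciprocal_example_is_elation :
    (Dmat⁻¹)ᵀ * Dmat =
        !![-1, 0, 0, 0;
           0, -1, 0, 0;
           0, 0, 1/2, 3/2;
           0, 0, -3/2, -5/2] ∧
      ∃ f : (Fin 4 → ℝ) →ₗ[ℝ] ℝ,
        (∀ v : Fin 4 → ℝ, ((Dmat⁻¹)ᵀ * Dmat) *ᵥ v = -v + f v • ![0, 0, -1, 1]) ∧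
          f ![0, 0, -1, 1] = 0 := by
  refine ⟨Dmat_inv_transpose_mul, dotProductEquiv ℝ (Fin 4) ![0, 0, -3/2, -3/2], fun v => ?_, ?_⟩
  · rw [Dmat_inv_transpose_mul_eq_neg_one_add_vecMulVec, mulVec_smul_one_add_vecMulVec,
      neg_one_smul, dotProductEquiv_apply_apply]
  · norm_num [dotProduct, Fin.sum_univ_succ]
end
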